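/- Let X ⊂ ℝ² be a finite set with |X| = n ≥ 3, let K = ⋂_{x∈X} B(x,1) be the intersection of the closed unit disks centered at the points of X, and suppose K has nonempty interior. Call a point p ∈ ∂K a vertex of K if there are at least two points x ∈ X with dist(p,x) = 1. If the set of vertices of K is exactly X (so K is a Reuleaux polygon with vertex set X), then n is odd. -/

import Mathlib

/-!
Every point of `X` is a vertex, hence lies in `K`, so `X` has diameter at most `1`, and every
point of `X` is at distance `1` from at least two others. In a planar set of diameter `1` any
two unit segments meet. Consequently a point `p` cannot have three unit neighbours: the one lying
angularly between the other two would have its second unit neighbour forced onto the line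
through `p`, and then equal to `p`. So the unit-distance graph on `X` is `2`-regular.

Fix an edge `ab`. No other point of `X` lies on the line `ab` (it would be inside the chord `ab`,
hence at distance `< 1` from all of `X`), every other edge crosses that line, and the second
neighbours `a'`, `b'` of `a` and `b` lie on the same side of it, since `aa'` meets `bb'`. Counting
the edges between the positive side `P` and the negative side `N` from both ends gives
`2 #P - 2 = 2 #N`, so `#X = #P + #N + 2 = 2 #N + 3` is odd.
-/

open Finset AffineMap

local notation "ℝ²" => EuclideanSpace ℝ (Fin 2)

lemma mul_pos_or_mul_pos_or_mul_pos {a b c : ℝ} (ha : a ≠ 0) (hb : b ≠ 0) (hc : c ≠ 0) :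
    0 < a * b ∨ 0 < b * c ∨ 0 < c * a := by
  rcases ha.lt_or_gt with ha | ha <;> rcases hb.lt_or_gt with hb | hb <;>
    rcases hc.lt_or_gt with hc | hc <;> first
      | exact Or.inl (by nlinarith) | exact Or.inr (Or.inl (by nlinarith))
      | exact Or.inr (Or.inr (by nlinarith))

lemma card_eq_card_add_one_of_sum_card_filter {α : Type*} {r : α → α → Prop} [DecidableRel r]
    (hr : ∀ v w, r v w → r w v) {P N Z : Finset α}
    (hP : ∀ v ∈ P, #(N.filter (r v)) + #(Z.filter (r v)) = 2)
    (hN : ∀ v ∈ N, #(P.filter (r v)) + #(Z.filter (r v)) = 2)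
    (hZP : ∑ z ∈ Z, #(P.filter (r z)) = 2) (hZN : ∑ z ∈ Z, #(N.filter (r z)) = 0) :
    #P = #N + 1 := by
  have swap (s t : Finset α) : ∑ v ∈ s, #(t.filter (r v)) = ∑ w ∈ t, #(s.filter (r w)) :=
    (sum_card_bipartiteAbove_eq_sum_card_bipartiteBelow r).trans <|
      sum_congr rfl fun _ _ ↦ congrArg card <| filter_congr fun _ _ ↦ ⟨hr _ _, hr _ _⟩
  have hP' := sum_congr rfl hP
  have hN' := sum_congr rfl hN
  rw [sum_add_distrib, swap P N, swap P Z, hZP, sum_const, smul_eq_mul] at hP'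
  rw [sum_add_distrib, swap N Z, hZN, sum_const, smul_eq_mul] at hN'
  omega

lemma card_eq_card_filter_pos_add_card_filter_neg_add_card_filter_eq_zero {α : Type*}
    (s : Finset α) (f : α → ℝ) :
    #s = #(s.filter (0 < f ·)) + #(s.filter (f · < 0)) + #(s.filter (f · = 0)) := by
  rw [← card_filter_add_card_filter_not (s := s) (0 < f ·),
    ← card_filter_add_card_filter_not (s := s.filter (¬0 < f ·)) (f · < 0),
    filter_filter, filter_filter, add_assoc]
  congr 3 <;> refine filter_congr fun x _ ↦ ?_
  · exact ⟨And.right, fun h ↦ ⟨h.not_gt, h⟩⟩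
  · exact ⟨fun h ↦ (not_lt.1 h.1).antisymm (not_lt.1 h.2), fun h ↦ ⟨h.not_gt, h.not_lt⟩⟩

/-- Twice the signed area of the triangle `a b x`. Together with `along a b x` it gives the
coordinates of `x` in the frame with origin `a` and first axis `b - a`, orthonormal when
`dist a b = 1`. -/
noncomputable def side (a b x : ℝ²) : ℝ :=
  (b 0 - a 0) * (x 1 - a 1) - (b 1 - a 1) * (x 0 - a 0)

noncomputable def along (a b x : ℝ²) : ℝ :=
  (b 0 - a 0) * (x 0 - a 0) + (b 1 - a 1) * (x 1 - a 1)

lemma dist_sq_eq_coord (x y : ℝ²) : dist x y ^ 2 = (x 0 - y 0) ^ 2 + (x 1 - y 1) ^ 2 := by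
  simp [EuclideanSpace.dist_sq_eq, Fin.sum_univ_two, Real.dist_eq, sq_abs]

lemma side_swap_left (a b x : ℝ²) : side b a x = -side a b x := by
  unfold side; ring

lemma side_swap_right (a b x : ℝ²) : side a x b = -side a b x := by
  unfold side; ring

lemma side_left (a b : ℝ²) : side a b a = 0 := by
  unfold side; ring

lemma side_right (a b : ℝ²) : side a b b = 0 := by
  unfold side; ring

lemma side_lineMap (a b x y : ℝ²) (t : ℝ) :
    side a b (lineMap x y t) = (1 - t) * side a b x + t * side a b y := by
  simp only [side, lineMap_apply_module, PiLp.add_apply, PiLp.smul_apply, smul_eq_mul]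
  ring

lemma dist_sq_eq_along_side {a b : ℝ²} (hab : dist a b = 1) (x y : ℝ²) :
    dist x y ^ 2 = (along a b x - along a b y) ^ 2 + (side a b x - side a b y) ^ 2 := by
  have h := dist_sq_eq_coord a b
  rw [hab] at h
  rw [dist_sq_eq_coord]
  unfold along side
  linear_combination ((x 0 - y 0) ^ 2 + (x 1 - y 1) ^ 2) * h

lemma along_left (a b : ℝ²) : along a b a = 0 := by
  unfold along; ring

lemma along_right {a b : ℝ²} (hab : dist a b = 1) : along a b b = 1 := by
  have h := dist_sq_eq_coord a b
  rw [hab] at h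
  unfold along
  linear_combination -h

lemma dist_sq_left {a b : ℝ²} (hab : dist a b = 1) (x : ℝ²) :
    dist x a ^ 2 = along a b x ^ 2 + side a b x ^ 2 := by
  rw [dist_sq_eq_along_side hab, along_left, side_left, sub_zero, sub_zero]

lemma dist_sq_right {a b : ℝ²} (hab : dist a b = 1) (x : ℝ²) :
    dist x b ^ 2 = (along a b x - 1) ^ 2 + side a b x ^ 2 := by
  rw [dist_sq_eq_along_side hab, along_right hab, side_right, sub_zero]

lemma ext_coord {x y : ℝ²} (h0 : x 0 = y 0) (h1 : x 1 = y 1) : x = y := by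
  ext i; fin_cases i <;> assumption

lemma eq_lineMap_of_side_eq_zero {a b x : ℝ²} (hab : dist a b = 1) (hx : side a b x = 0) :
    x = lineMap a b (along a b x) := by
  have h := dist_sq_eq_coord a b
  rw [hab] at h
  unfold side at hx
  apply ext_coord <;>
    simp only [along, lineMap_apply_module, PiLp.add_apply, PiLp.smul_apply, smul_eq_mul]
  · linear_combination (x 0 - a 0) * h - (b 1 - a 1) * hx
  · linear_combination (x 1 - a 1) * h + (b 0 - a 0) * hx

lemma mem_segment_of_side_eq_zero {a b x : ℝ²} (hab : dist a b = 1) (hx : side a b x = 0)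
    (hxa : dist x a ≤ 1) (hxb : dist x b ≤ 1) : x ∈ segment ℝ a b := by
  have ha := dist_sq_left hab x
  have hb := dist_sq_right hab x
  have ha' : dist x a ^ 2 ≤ 1 := by nlinarith [dist_nonneg (x := x) (y := a)]
  have hb' : dist x b ^ 2 ≤ 1 := by nlinarith [dist_nonneg (x := x) (y := b)]
  rw [hx] at ha hb
  rw [segment_eq_image_lineMap]
  exact ⟨along a b x, ⟨by nlinarith, by nlinarith⟩, (eq_lineMap_of_side_eq_zero hab hx).symm⟩

lemma eq_of_side_eq_zero {a b x : ℝ²} (hab : dist a b = 1) (hx : side a b x = 0)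
    (hxa : dist x a ≤ 1) (hxb : dist x b = 1) : x = a := by
  obtain ⟨t, ⟨ht0, ht1⟩, rfl⟩ :=
    (segment_eq_image_lineMap ℝ a b ▸ mem_segment_of_side_eq_zero hab hx hxa hxb.le)
  rw [dist_lineMap_right, hab, mul_one, Real.norm_eq_abs, abs_of_nonneg (by linarith)] at hxb
  rw [show t = 0 by linarith, lineMap_apply_zero]

lemma sq_dist_lt_one_of_mem_upper_lens {x₁ y₁ x₂ y₂ : ℝ} (hy₁ : 0 < y₁) (hy₂ : 0 < y₂)
    (h₁ : x₁ ^ 2 + y₁ ^ 2 ≤ 1) (h₁' : (x₁ - 1) ^ 2 + y₁ ^ 2 ≤ 1)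
    (h₂ : x₂ ^ 2 + y₂ ^ 2 ≤ 1) (h₂' : (x₂ - 1) ^ 2 + y₂ ^ 2 ≤ 1) :
    (x₁ - x₂) ^ 2 + (y₁ - y₂) ^ 2 < 1 := by
  wlog hy : y₁ ≤ y₂ generalizing x₁ y₁ x₂ y₂
  · have := this hy₂ hy₁ h₂ h₂' h₁ h₁' (by linarith)
    linarith
  have hx₁ : 0 ≤ x₁ := by nlinarith
  have hx₁' : x₁ ≤ 1 := by nlinarith
  -- `(x₁ - x₂)² + y₂² = (1 - x₁) (x₂² + y₂²) + x₁ ((x₂ - 1)² + y₂²) - x₁ (1 - x₁)`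
  nlinarith [mul_le_mul_of_nonneg_left h₂ (by linarith : (0 : ℝ) ≤ 1 - x₁),
    mul_le_mul_of_nonneg_left h₂' hx₁, mul_nonneg hx₁ (by linarith : (0 : ℝ) ≤ 1 - x₁)]

lemma side_mul_side_nonpos {a b c d : ℝ²} (hab : dist a b = 1) (hcd : dist c d = 1)
    (hca : dist c a ≤ 1) (hcb : dist c b ≤ 1) (hda : dist d a ≤ 1) (hdb : dist d b ≤ 1) :
    side a b c * side a b d ≤ 0 := by
  have upper : ∀ {a b : ℝ²}, dist a b = 1 → dist c a ≤ 1 → dist c b ≤ 1 → dist d a ≤ 1 →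
      dist d b ≤ 1 → 0 < side a b c → 0 < side a b d → False := by
    intro a b hab hca hcb hda hdb hc hd
    have hsq : ∀ {x y : ℝ²}, dist x y ≤ 1 → dist x y ^ 2 ≤ 1 := fun h ↦
      pow_le_one₀ dist_nonneg h
    have := sq_dist_lt_one_of_mem_upper_lens hc hd
      (dist_sq_left hab c ▸ hsq hca) (dist_sq_right hab c ▸ hsq hcb)
      (dist_sq_left hab d ▸ hsq hda) (dist_sq_right hab d ▸ hsq hdb)
    rw [← dist_sq_eq_along_side hab, hcd] at this
    norm_num at this
  by_contra! h
  rcases mul_pos_iff.1 h with ⟨hc, hd⟩ | ⟨hc, hd⟩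
  · exact upper hab hca hcb hda hdb hc hd
  · rw [← neg_pos, ← side_swap_left] at hc hd
    exact upper (dist_comm a b ▸ hab) hcb hca hdb hda hc hd

lemma exists_mem_segment_side_eq_zero {a b c d : ℝ²} (h : side a b c * side a b d ≤ 0) :
    ∃ x ∈ segment ℝ c d, side a b x = 0 := by
  have hcont : Continuous fun t : ℝ ↦ side a b (lineMap c d t) := by
    simp only [side_lineMap]; fun_prop
  have h0 : (0 : ℝ) ∈ Set.uIcc (side a b c) (side a b d) := by
    rw [Set.mem_uIcc]
    rcases mul_nonpos_iff.1 h with h | h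
    · exact Or.inr ⟨h.2, h.1⟩
    · exact Or.inl h
  obtain ⟨t, ht, hx⟩ := intermediate_value_uIcc (a := 0) (b := 1) hcont.continuousOn
    (by simpa only [lineMap_apply_zero, lineMap_apply_one] using h0)
  rw [Set.uIcc_of_le zero_le_one] at ht
  exact ⟨lineMap c d t, segment_eq_image_lineMap ℝ c d ▸ ⟨t, ht, rfl⟩, hx⟩

lemma segment_inter_nonempty {a b c d : ℝ²} (hab : dist a b = 1) (hcd : dist c d = 1)
    (hca : dist c a ≤ 1) (hcb : dist c b ≤ 1) (hda : dist d a ≤ 1) (hdb : dist d b ≤ 1) :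
    (segment ℝ a b ∩ segment ℝ c d).Nonempty := by
  obtain ⟨x, hx, hside⟩ :=
    exists_mem_segment_side_eq_zero (side_mul_side_nonpos hab hcd hca hcb hda hdb)
  have hxa := (convex_closedBall a 1).segment_subset hca hda hx
  have hxb := (convex_closedBall b 1).segment_subset hcb hdb hx
  exact ⟨x, mem_segment_of_side_eq_zero hab hside hxa hxb, hx⟩

lemma side_mul_side_nonneg_of_segment_inter_nonempty {p q y z : ℝ²} (hpq : p ≠ q)
    (h : (segment ℝ p y ∩ segment ℝ q z).Nonempty) : 0 ≤ side p q y * side p q z := by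
  obtain ⟨x, hxy, hxz⟩ := h
  rw [segment_eq_image_lineMap] at hxy hxz
  obtain ⟨t, ⟨ht, -⟩, rfl⟩ := hxy
  obtain ⟨s, ⟨hs, -⟩, hst⟩ := hxz
  have hside := congrArg (side p q) hst
  rw [side_lineMap, side_lineMap, side_left, side_right] at hside
  by_contra! hneg
  have hy : t * side p q y = 0 := by nlinarith [mul_nonneg hs ht]
  have hz : s * side p q z = 0 := by linarith
  have ht0 : t = 0 := (mul_eq_zero.1 hy).resolve_right fun h ↦ by simp [h] at hneg
  have hs0 : s = 0 := (mul_eq_zero.1 hz).resolve_right fun h ↦ by simp [h] at hneg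
  rw [ht0, hs0, lineMap_apply_zero, lineMap_apply_zero] at hst
  exact hpq hst.symm

lemma side_ne_zero_of_dist_eq_one {a b v w : ℝ²} (hab : dist a b = 1)
    (hva : dist v a ≤ 1) (hvb : dist v b ≤ 1) (hvw : dist v w = 1)
    (hwa : dist w a ≤ 1) (hwb : dist w b ≤ 1) (hva' : v ≠ a) (hvb' : v ≠ b) :
    side a b v ≠ 0 := by
  intro hv
  have hab' : a ≠ b := by rintro rfl; simp at hab
  have hv' : v ∈ openSegment ℝ a b := mem_openSegment_of_ne_left_right hva'.symm hvb'.symm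
    (mem_segment_of_side_eq_zero hab hv hva hvb)
  have hwa' : a ∈ Metric.closedBall w 1 := by rw [Metric.mem_closedBall, dist_comm]; exact hwa
  have hwb' : b ∈ Metric.closedBall w 1 := by rw [Metric.mem_closedBall, dist_comm]; exact hwb
  have := (strictConvex_closedBall ℝ w 1).openSegment_subset hwa' hwb' hab' hv'
  rw [interior_closedBall w one_ne_zero, Metric.mem_ball] at this
  linarith

lemma eq_of_side_mul_side_neg {p y₁ y₂ y₃ z : ℝ²}
    (h₁ : dist p y₁ = 1) (h₂ : dist p y₂ = 1) (h₃ : dist p y₃ = 1)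
    (h₂₁ : dist y₂ y₁ ≤ 1) (h₂₃ : dist y₂ y₃ ≤ 1) (hz : dist y₂ z = 1)
    (hzp : dist z p ≤ 1) (hz₁ : dist z y₁ ≤ 1) (hz₃ : dist z y₃ ≤ 1)
    (hbetween : side p y₂ y₁ * side p y₂ y₃ < 0) : z = p := by
  have hp₂ : p ≠ y₂ := fun h ↦ by simp [h] at h₂
  have h₂p : dist y₂ p ≤ 1 := (dist_comm p y₂ ▸ h₂).le
  have s₁ := side_mul_side_nonneg_of_segment_inter_nonempty hp₂
    (segment_inter_nonempty h₁ hz h₂p h₂₁ hzp hz₁)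
  have s₃ := side_mul_side_nonneg_of_segment_inter_nonempty hp₂
    (segment_inter_nonempty h₃ hz h₂p h₂₃ hzp hz₃)
  have hside : side p y₂ z = 0 := by
    rcases mul_neg_iff.1 hbetween with ⟨h, h'⟩ | ⟨h, h'⟩
    · nlinarith
    · nlinarith
  exact eq_of_side_eq_zero h₂ hside hzp (dist_comm y₂ z ▸ hz)

noncomputable def unitNeighbors (X : Finset ℝ²) (x : ℝ²) : Finset ℝ² :=
  X.filter (dist x · = 1)

section UnitDiameter

variable {X : Finset ℝ²}

lemma mem_unitNeighbors {x y : ℝ²} : y ∈ unitNeighbors X x ↔ y ∈ X ∧ dist x y = 1 :=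
  mem_filter

lemma exists_mem_unitNeighbors_ne {x : ℝ²} (hx : 2 ≤ #(unitNeighbors X x)) (p : ℝ²) :
    ∃ z ∈ X, z ≠ p ∧ dist x z = 1 := by
  obtain ⟨z, hz, hzp⟩ := exists_mem_ne (s := unitNeighbors X x) (by omega) p
  exact ⟨z, (mem_unitNeighbors.1 hz).1, hzp, (mem_unitNeighbors.1 hz).2⟩

lemma exists_unitNeighbors_eq_pair {x y : ℝ²} (hx : #(unitNeighbors X x) = 2)
    (hy : y ∈ unitNeighbors X x) : ∃ z, z ≠ y ∧ unitNeighbors X x = {y, z} := by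
  obtain ⟨z, hz⟩ := card_eq_one.1 (by rw [card_erase_of_mem hy, hx])
  exact ⟨z, (mem_erase.1 (hz ▸ mem_singleton_self z)).1, by rw [← insert_erase hy, hz]⟩

lemma card_unitNeighbors_le_two (hdiam : ∀ x ∈ X, ∀ y ∈ X, dist x y ≤ 1)
    (hdeg : ∀ x ∈ X, 2 ≤ #(unitNeighbors X x)) {p : ℝ²} (hp : p ∈ X) :
    #(unitNeighbors X p) ≤ 2 := by
  by_contra! h
  obtain ⟨t, hts, htc⟩ := exists_subset_card_eq (show 3 ≤ #(unitNeighbors X p) by omega)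
  obtain ⟨y₁, y₂, y₃, h₁₂, h₁₃, h₂₃, rfl⟩ := card_eq_three.1 htc
  simp only [insert_subset_iff, singleton_subset_iff, mem_unitNeighbors] at hts
  obtain ⟨⟨hy₁, h₁⟩, ⟨hy₂, h₂⟩, ⟨hy₃, h₃⟩⟩ := hts
  have not_between {u y w : ℝ²} (hu : u ∈ X) (hy : y ∈ X) (hw : w ∈ X) (hpu : dist p u = 1)
      (hpy : dist p y = 1) (hpw : dist p w = 1) : ¬side p y u * side p y w < 0 := fun hneg ↦ by
    obtain ⟨z, hz, hzp, hyz⟩ := exists_mem_unitNeighbors_ne (hdeg y hy) p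
    exact hzp (eq_of_side_mul_side_neg hpu hpy hpw (hdiam y hy u hu) (hdiam y hy w hw) hyz
      (hdiam z hz p hp) (hdiam z hz u hu) (hdiam z hz w hw) hneg)
  have side_ne {u w : ℝ²} (hu : u ∈ X) (hw : w ∈ X) (hpu : dist p u = 1) (hpw : dist p w = 1)
      (huw : u ≠ w) : side p u w ≠ 0 := fun hside ↦ by
    rw [← neg_eq_zero, ← side_swap_left] at hside
    exact huw (eq_of_side_eq_zero (dist_comm p u ▸ hpu) hside (hdiam w hw u hu)
      (dist_comm p w ▸ hpw)).symm
  rcases mul_pos_or_mul_pos_or_mul_pos (side_ne hy₁ hy₂ h₁ h₂ h₁₂) (side_ne hy₂ hy₃ h₂ h₃ h₂₃)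
    (side_ne hy₃ hy₁ h₃ h₁ h₁₃.symm) with h | h | h
  · exact not_between hy₁ hy₂ hy₃ h₁ h₂ h₃ (by rw [side_swap_right]; linarith)
  · exact not_between hy₂ hy₃ hy₁ h₂ h₃ h₁ (by rw [side_swap_right]; linarith)
  · exact not_between hy₃ hy₁ hy₂ h₃ h₁ h₂ (by rw [side_swap_right]; linarith)

lemma side_ne_zero_of_mem (hdiam : ∀ x ∈ X, ∀ y ∈ X, dist x y ≤ 1)
    (hdeg : ∀ x ∈ X, 2 ≤ #(unitNeighbors X x)) {a b v : ℝ²} (hab : dist a b = 1)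
    (ha : a ∈ X) (hb : b ∈ X) (hv : v ∈ X) (hva : v ≠ a) (hvb : v ≠ b) : side a b v ≠ 0 := by
  obtain ⟨w, hw, -, hvw⟩ := exists_mem_unitNeighbors_ne (hdeg v hv) v
  exact side_ne_zero_of_dist_eq_one hab (hdiam v hv a ha) (hdiam v hv b hb) hvw
    (hdiam w hw a ha) (hdiam w hw b hb) hva hvb

lemma side_mul_side_pos (hdiam : ∀ x ∈ X, ∀ y ∈ X, dist x y ≤ 1)
    (hdeg : ∀ x ∈ X, 2 ≤ #(unitNeighbors X x)) {a b v w : ℝ²} (hab : dist a b = 1)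
    (ha : a ∈ X) (hb : b ∈ X) (hv : v ∈ X) (hw : w ∈ X) (hav : dist a v = 1)
    (hbw : dist b w = 1) (hvb : v ≠ b) (hwa : w ≠ a) : 0 < side a b v * side a b w := by
  have hab' : a ≠ b := by rintro rfl; simp at hab
  have hnonneg := side_mul_side_nonneg_of_segment_inter_nonempty hab' <|
    segment_inter_nonempty hav hbw (hdiam b hb a ha) (hdiam b hb v hv) (hdiam w hw a ha)
      (hdiam w hw v hv)
  have hva : v ≠ a := by rintro rfl; simp at hav
  have hwb : w ≠ b := by rintro rfl; simp at hbw
  exact hnonneg.lt_of_ne (mul_ne_zero (side_ne_zero_of_mem hdiam hdeg hab ha hb hv hva hvb)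
    (side_ne_zero_of_mem hdiam hdeg hab ha hb hw hwa hwb)).symm

lemma filter_side_eq_zero (hdiam : ∀ x ∈ X, ∀ y ∈ X, dist x y ≤ 1)
    (hdeg : ∀ x ∈ X, 2 ≤ #(unitNeighbors X x)) {a b : ℝ²} (hab : dist a b = 1)
    (ha : a ∈ X) (hb : b ∈ X) : X.filter (side a b · = 0) = {a, b} := by
  ext v
  simp only [mem_filter, mem_insert, mem_singleton]
  constructor
  · rintro ⟨hv, hside⟩
    by_contra! h
    exact side_ne_zero_of_mem hdiam hdeg hab ha hb hv h.1 h.2 hside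
  · rintro (rfl | rfl)
    exacts [⟨ha, side_left _ _⟩, ⟨hb, side_right _ _⟩]

lemma filter_dist_eq_one_eq_empty_of_side_mul_side_pos
    (hdiam : ∀ x ∈ X, ∀ y ∈ X, dist x y ≤ 1) {a b v : ℝ²} (hab : dist a b = 1) (ha : a ∈ X)
    (hb : b ∈ X) (hv : v ∈ X) {S : Finset ℝ²} (hS : S ⊆ X)
    (hside : ∀ w ∈ S, 0 < side a b v * side a b w) : S.filter (dist v · = 1) = ∅ :=
  filter_eq_empty_iff.2 fun w hw hvw ↦ (hside w hw).not_ge <|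
    side_mul_side_nonpos hab hvw (hdiam v hv a ha) (hdiam v hv b hb) (hdiam w (hS hw) a ha)
      (hdiam w (hS hw) b hb)

lemma card_unitNeighbors_eq_add (f : ℝ² → ℝ) (v : ℝ²) :
    #(unitNeighbors X v) = #((X.filter (0 < f ·)).filter (dist v · = 1)) +
      #((X.filter (f · < 0)).filter (dist v · = 1)) +
      #((X.filter (f · = 0)).filter (dist v · = 1)) := by
  simp only [filter_comm _ (dist v · = 1)]
  exact card_eq_card_filter_pos_add_card_filter_neg_add_card_filter_eq_zero _ _

lemma card_filter_unitNeighbors_of_eq_pair {f : ℝ² → ℝ} {u c d : ℝ²}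
    (hu : unitNeighbors X u = {c, d}) (hc : f c = 0) (hd : 0 < f d) :
    #((X.filter (0 < f ·)).filter (dist u · = 1)) = 1 ∧
      #((X.filter (f · < 0)).filter (dist u · = 1)) = 0 := by
  rw [filter_comm (0 < f ·), filter_comm (f · < 0), show X.filter (dist u · = 1) = {c, d} from hu]
  simp [filter_insert, filter_singleton, hc, hd, hd.not_gt]

theorem odd_card_of_unitNeighbors_eq_pair (hdiam : ∀ x ∈ X, ∀ y ∈ X, dist x y ≤ 1)
    (hdeg : ∀ x ∈ X, #(unitNeighbors X x) = 2) {a b a' b' : ℝ²}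
    (ha : unitNeighbors X a = {b, a'}) (hb : unitNeighbors X b = {a, b'})
    (ha' : 0 < side a b a') (hb' : 0 < side a b b') : Odd #X := by
  obtain ⟨hbX, hab⟩ := mem_unitNeighbors.1 (ha ▸ mem_insert_self b {a'})
  have haX : a ∈ X := (mem_unitNeighbors.1 (hb ▸ mem_insert_self a {b'})).1
  have hab' : a ≠ b := by rintro rfl; simp at hab
  set P := X.filter (0 < side a b ·)
  set N := X.filter (side a b · < 0)
  set Z := X.filter (side a b · = 0)
  have hZ : Z = {a, b} := filter_side_eq_zero hdiam (fun x hx ↦ (hdeg x hx).ge) hab haX hbX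
  obtain ⟨haP, haN⟩ : #(P.filter (dist a · = 1)) = 1 ∧ #(N.filter (dist a · = 1)) = 0 :=
    card_filter_unitNeighbors_of_eq_pair ha (side_right a b) ha'
  obtain ⟨hbP, hbN⟩ : #(P.filter (dist b · = 1)) = 1 ∧ #(N.filter (dist b · = 1)) = 0 :=
    card_filter_unitNeighbors_of_eq_pair hb (side_left a b) hb'
  have hsplit {v : ℝ²} (hv : v ∈ X) : #(P.filter (dist v · = 1)) +
      #(N.filter (dist v · = 1)) + #(Z.filter (dist v · = 1)) = 2 :=
    (card_unitNeighbors_eq_add (side a b) v).symm.trans (hdeg v hv)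
  have no_edge {S : Finset ℝ²} (hS : S ⊆ X) {v : ℝ²} (hv : v ∈ S)
      (hside : ∀ w ∈ S, 0 < side a b v * side a b w) : #(S.filter (dist v · = 1)) = 0 := by
    rw [filter_dist_eq_one_eq_empty_of_side_mul_side_pos hdiam hab haX hbX (hS hv) hS hside,
      card_empty]
  have hPN : #P = #N + 1 := card_eq_card_add_one_of_sum_card_filter
    (r := (dist · · = 1)) (P := P) (N := N) (Z := Z) (fun v w h ↦ dist_comm v w ▸ h)
    (fun v hv ↦ by
      have : #(P.filter (dist v · = 1)) = 0 := no_edge (filter_subset _ X) hv fun w hw ↦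
        mul_pos (mem_filter.1 hv).2 (mem_filter.1 hw).2
      have := hsplit (mem_filter.1 hv).1
      omega)
    (fun v hv ↦ by
      have : #(N.filter (dist v · = 1)) = 0 := no_edge (filter_subset _ X) hv fun w hw ↦
        mul_pos_of_neg_of_neg (mem_filter.1 hv).2 (mem_filter.1 hw).2
      have := hsplit (mem_filter.1 hv).1
      omega)
    (by rw [hZ, sum_pair hab', haP, hbP]) (by rw [hZ, sum_pair hab', haN, hbN])
  have hX : #X = #P + #N + #Z :=
    card_eq_card_filter_pos_add_card_filter_neg_add_card_filter_eq_zero X (side a b)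
  rw [hZ, card_pair hab'] at hX
  exact ⟨#N + 1, by omega⟩

theorem odd_card_of_two_le_card_unitNeighbors (hX : X.Nonempty)
    (hdiam : ∀ x ∈ X, ∀ y ∈ X, dist x y ≤ 1) (hdeg : ∀ x ∈ X, 2 ≤ #(unitNeighbors X x)) :
    Odd #X := by
  have hdeg₂ : ∀ x ∈ X, #(unitNeighbors X x) = 2 := fun x hx ↦
    (card_unitNeighbors_le_two hdiam hdeg hx).antisymm (hdeg x hx)
  obtain ⟨a, ha⟩ := hX
  obtain ⟨b, hb⟩ := card_pos.1 (by have := hdeg a ha; omega : 0 < #(unitNeighbors X a))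
  obtain ⟨hbX, hab⟩ := mem_unitNeighbors.1 hb
  obtain ⟨a', ha'b, hNa⟩ := exists_unitNeighbors_eq_pair (hdeg₂ a ha) hb
  obtain ⟨b', hb'a, hNb⟩ := exists_unitNeighbors_eq_pair (hdeg₂ b hbX)
    (mem_unitNeighbors.2 ⟨ha, dist_comm a b ▸ hab⟩)
  obtain ⟨ha'X, haa'⟩ := mem_unitNeighbors.1 (hNa ▸ mem_insert_of_mem (mem_singleton_self a'))
  obtain ⟨hb'X, hbb'⟩ := mem_unitNeighbors.1 (hNb ▸ mem_insert_of_mem (mem_singleton_self b'))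
  rcases mul_pos_iff.1 (side_mul_side_pos hdiam hdeg hab ha hbX ha'X hb'X haa' hbb' ha'b hb'a)
    with ⟨h, h'⟩ | ⟨h, h'⟩
  · exact odd_card_of_unitNeighbors_eq_pair hdiam hdeg₂ hNa hNb h h'
  · rw [← neg_pos, ← side_swap_left] at h h'
    exact odd_card_of_unitNeighbors_eq_pair hdiam hdeg₂ hNb hNa h' h

end UnitDiameter

open Classical in
theorem reuleaux_polygon_vertices_odd_general
    (X : Finset (EuclideanSpace ℝ (Fin 2)))
    (hn : 3 ≤ X.card)
    (K : Set (EuclideanSpace ℝ (Fin 2)))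
    (hK : K = ⋂ x ∈ X, Metric.closedBall x 1)
    (hvert : ∀ p : EuclideanSpace ℝ (Fin 2),
      (p ∈ frontier K ∧ 2 ≤ (X.filter fun x => dist p x = 1).card) ↔ p ∈ X) :
    Odd X.card := by
  have hKclosed : IsClosed K := hK ▸ isClosed_biInter fun _ _ ↦ Metric.isClosed_closedBall
  refine odd_card_of_two_le_card_unitNeighbors (card_pos.1 (by omega))
    (fun x hx y hy ↦ ?_) fun x hx ↦ ?_
  · have hxK : x ∈ K := hKclosed.frontier_subset ((hvert x).2 hx).1
    rw [hK, Set.mem_iInter₂] at hxK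
    exact hxK y hy
  · exact ((hvert x).2 hx).2

open Classical in
/-- Let `X ⊂ ℝ²` be a finite set of `n ≥ 3` points and let `K` be the
intersection of the closed unit disks centered at the points of `X`, with nonempty
interior.  A point `p` of the frontier of `K` is a *vertex* of `K` if at least two points
of `X` are at distance `1` from `p`.  If the set of vertices of `K` is exactly `X` (`K`
is a Reuleaux polygon with vertex set `X`), then `n` is odd. -/
theorem reuleaux_polygon_vertices_odd
    (X : Finset (EuclideanSpace ℝ (Fin 2)))
    (hn : 3 ≤ X.card)
    (K : Set (EuclideanSpace ℝ (Fin 2)))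
    (hK : K = ⋂ x ∈ X, Metric.closedBall x 1)
    (hint : (interior K).Nonempty)
    (hvert : ∀ p : EuclideanSpace ℝ (Fin 2),
      (p ∈ frontier K ∧ 2 ≤ (X.filter fun x => dist p x = 1).card) ↔ p ∈ X) :
    Odd X.card :=
  reuleaux_polygon_vertices_odd_general X hn K hK hvert
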